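/- Let A be a separable C*-algebra. Then the set of locally finite dimensional (LFD) tracial states on A is closed in the weak* topology of the dual space A*: if a net (equivalently, by separability, a sequence) of LFD tracial states converges pointwise on A to a tracial state τ, then τ is LFD. -/

import Mathlib

open scoped ComplexOrder ENNReal
open Filter Metric Topology

set_option synthInstance.maxHeartbeats 400000
set_option maxHeartbeats 1000000

noncomputable section

/-- The C*-algebra `M_k` of `k × k` complex matrices, realized as the bounded operators
on the `k`-dimensional complex Hilbert space. -/
abbrev MatAlg (k : ℕ) : Type := EuclideanSpace ℂ (Fin k) →L[ℂ] EuclideanSpace ℂ (Fin k)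

variable {A : Type*} [NonUnitalCStarAlgebra A]

/-- A linear map `φ : A → B(H)` is completely positive if, for every `n`, every `a : Fin n → A`
and every `v : Fin n → H`, the positivity condition `0 ≤ ∑ᵢⱼ ⟪vᵢ, φ(aᵢ* aⱼ) vⱼ⟫` holds; this is
the standard characterization saying that the matrix `(φ (aᵢ* aⱼ))ᵢⱼ` is a positive operator
matrix, and (since every positive matrix over `A` is a sum of matrices `(aᵢ* aⱼ)ᵢⱼ`) it is
equivalent to positivity of all the matrix amplifications of `φ`. -/
def IsCompletelyPositive {H : Type*} [NormedAddCommGroup H] [InnerProductSpace ℂ H]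
    (φ : A →ₗ[ℂ] (H →L[ℂ] H)) : Prop :=
  ∀ (n : ℕ) (a : Fin n → A) (v : Fin n → H),
    0 ≤ ∑ i, ∑ j, (inner ℂ (v i) (φ (star (a i) * a j) (v j)) : ℂ)

/-- A contractive completely positive (c.c.p.) map. -/
def IsCCP {H : Type*} [NormedAddCommGroup H] [InnerProductSpace ℂ H]
    (φ : A →ₗ[ℂ] (H →L[ℂ] H)) : Prop :=
  IsCompletelyPositive φ ∧ ∀ a : A, ‖φ a‖ ≤ ‖a‖

/-- The multiplicative domain `A_φ` of a map `φ`. -/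
def MultDomain {H : Type*} [NormedAddCommGroup H] [InnerProductSpace ℂ H]
    (φ : A →ₗ[ℂ] (H →L[ℂ] H)) : Set A :=
  {a : A | ∀ b : A, φ (a * b) = φ a * φ b ∧ φ (b * a) = φ b * φ a}

/-- The normalized trace `tr_k = Tr / k` on `M_k`. -/
def normTr {k : ℕ} (T : MatAlg k) : ℂ :=
  (LinearMap.trace ℂ (EuclideanSpace ℂ (Fin k)) T.toLinearMap) / k

/-- A tracial state: a positive linear functional of norm one with the trace property. -/
def IsTracialState (τ : A →L[ℂ] ℂ) : Prop :=
  ‖τ‖ = 1 ∧ (∀ a : A, 0 ≤ τ (star a * a)) ∧ ∀ a b : A, τ (a * b) = τ (b * a)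

/-- A trace `τ` is locally finite dimensional (LFD) if there is a sequence of c.c.p. maps
`φ n : A → M_{k n}` such that `dist (a, A_{φ n}) → 0` and `tr_{k n} (φ n a) → τ a` for all
`a ∈ A`. -/
def IsLFDTrace (τ : A →L[ℂ] ℂ) : Prop :=
  ∃ (k : ℕ → ℕ) (φ : ∀ n : ℕ, A →ₗ[ℂ] MatAlg (k n)),
    (∀ n, 0 < k n) ∧ (∀ n, IsCCP (φ n)) ∧
    (∀ a : A, Tendsto (fun n => infDist a (MultDomain (φ n))) atTop (𝓝 0)) ∧
    (∀ a : A, Tendsto (fun n => normTr (φ n a)) atTop (𝓝 (τ a)))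

/-- A representation of `A` on a complex Hilbert space, bundled with its space. -/
structure HilbertRep (A : Type*) [NonUnitalCStarAlgebra A] where
  /-- the underlying Hilbert space -/
  H : Type
  [instNACG : NormedAddCommGroup H]
  [instIPS : InnerProductSpace ℂ H]
  [instCS : CompleteSpace H]
  /-- the star homomorphism `A → B(H)` -/
  ρ : A →⋆ₙₐ[ℂ] (H →L[ℂ] H)

attribute [instance] HilbertRep.instNACG HilbertRep.instIPS HilbertRep.instCS

/-- Irreducibility of a representation: the only closed invariant subspaces are `⊥` and `⊤`. -/
def HilbertRep.Irreducible (R : HilbertRep A) : Prop :=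
  ∀ S : Submodule ℂ R.H, IsClosed (S : Set R.H) →
    (∀ (a : A), ∀ x ∈ S, R.ρ a x ∈ S) → S = ⊥ ∨ S = ⊤

/-- Disjointness of two representations: the only bounded intertwiner is `0`. -/
def HilbertRep.Disjoint (R₁ R₂ : HilbertRep A) : Prop :=
  ∀ T : R₁.H →L[ℂ] R₂.H, (∀ a : A, T ∘L R₁.ρ a = R₂.ρ a ∘L T) → T = 0

/-- A nonzero finite rank orthogonal projection on a Hilbert space. -/
def IsFinRankProj {H : Type*} [NormedAddCommGroup H] [InnerProductSpace ℂ H] [CompleteSpace H]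
    (p : H →L[ℂ] H) : Prop :=
  IsSelfAdjoint p ∧ p * p = p ∧ p ≠ 0 ∧ FiniteDimensional ℂ (LinearMap.range p.toLinearMap)

/-- For a finite rank projection `p` and a bounded operator `S` on `H`, the number `Tr (p S)`:
the trace of `p S p` viewed as an endomorphism of the (finite dimensional) range of `p`. -/
def trProj {H : Type*} [NormedAddCommGroup H] [InnerProductSpace ℂ H] [CompleteSpace H]
    (p S : H →L[ℂ] H) : ℂ :=
  LinearMap.trace ℂ (LinearMap.range p.toLinearMap)
    ((p ∘L S ∘L p).toLinearMap.restrict (fun x _ => ⟨S (p x), rfl⟩))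

/-- The rank of a projection `p`, i.e. `Tr p`. -/
def rankProj {H : Type*} [NormedAddCommGroup H] [InnerProductSpace ℂ H] [CompleteSpace H]
    (p : H →L[ℂ] H) : ℕ :=
  Module.finrank ℂ (LinearMap.range p.toLinearMap)

/-- Simplicity of a C*-algebra: the only closed two-sided ideals are `0` and `A`. -/
def IsSimpleCStar (A : Type*) [NonUnitalCStarAlgebra A] : Prop :=
  ∀ I : TwoSidedIdeal A, IsClosed (I : Set A) → I = ⊥ ∨ I = ⊤

/-- A trace `τ` is quasidiagonal (QD) if there is a sequence of c.c.p. maps `φ n : A → M_{k n}`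
which is asymptotically multiplicative in norm and whose normalized traces recover `τ`. -/
def IsQDTrace (τ : A →L[ℂ] ℂ) : Prop :=
  ∃ (k : ℕ → ℕ) (φ : ∀ n : ℕ, A →ₗ[ℂ] MatAlg (k n)),
    (∀ n, 0 < k n) ∧ (∀ n, IsCCP (φ n)) ∧
    (∀ a b : A, Tendsto (fun n => ‖φ n (a * b) - φ n a * φ n b‖) atTop (𝓝 0)) ∧
    (∀ a : A, Tendsto (fun n => normTr (φ n a)) atTop (𝓝 (τ a)))

/-- Inner quasidiagonality, in the Blackadar–Kirchberg characterization taken here as the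
definition: there is a sequence of c.c.p. maps `φ n : A → M_{k n}` with `‖φ n a‖ → ‖a‖` and
`dist (a, A_{φ n}) → 0` for every `a ∈ A`. -/
def IsInnerQD (A : Type*) [NonUnitalCStarAlgebra A] : Prop :=
  ∃ (k : ℕ → ℕ) (φ : ∀ n : ℕ, A →ₗ[ℂ] MatAlg (k n)),
    (∀ n, IsCCP (φ n)) ∧
    (∀ a : A, Tendsto (fun n => ‖φ n a‖) atTop (𝓝 ‖a‖)) ∧
    (∀ a : A, Tendsto (fun n => infDist a (MultDomain (φ n))) atTop (𝓝 0))


lemma coord_le_norm {k : ℕ} (v : EuclideanSpace ℂ (Fin k)) (i : Fin k) : ‖v i‖ ≤ ‖v‖ := by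
  have h : (inner ℂ (EuclideanSpace.single i (1:ℂ)) v : ℂ) = v i := by
    rw [EuclideanSpace.inner_single_left]; simp
  calc ‖v i‖ = ‖(inner ℂ (EuclideanSpace.single i (1:ℂ)) v : ℂ)‖ := by rw [h]
    _ ≤ ‖EuclideanSpace.single i (1:ℂ)‖ * ‖v‖ := norm_inner_le_norm _ _
    _ = ‖v‖ := by rw [EuclideanSpace.norm_single]; simp

lemma trace_le {k : ℕ} (S : MatAlg k) :
    ‖LinearMap.trace ℂ (EuclideanSpace ℂ (Fin k)) S.toLinearMap‖ ≤ k * ‖S‖ := by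
  rw [LinearMap.trace_eq_matrix_trace ℂ (EuclideanSpace.basisFun (Fin k) ℂ).toBasis,
    Matrix.trace]
  calc ‖∑ i, (LinearMap.toMatrix (EuclideanSpace.basisFun (Fin k) ℂ).toBasis
        (EuclideanSpace.basisFun (Fin k) ℂ).toBasis S.toLinearMap).diag i‖
      ≤ ∑ _i : Fin k, ‖S‖ := by
        refine (norm_sum_le _ _).trans (Finset.sum_le_sum fun i _ => ?_)
        rw [Matrix.diag_apply, LinearMap.toMatrix_apply]
        have h1 : ((EuclideanSpace.basisFun (Fin k) ℂ).toBasis.repr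
            (S.toLinearMap ((EuclideanSpace.basisFun (Fin k) ℂ).toBasis i))) i
            = (S ((EuclideanSpace.basisFun (Fin k) ℂ) i)) i := rfl
        rw [h1]
        refine (coord_le_norm _ i).trans ?_
        calc ‖S ((EuclideanSpace.basisFun (Fin k) ℂ) i)‖
            ≤ ‖S‖ * ‖(EuclideanSpace.basisFun (Fin k) ℂ) i‖ := S.le_opNorm _
          _ = ‖S‖ := by rw [(EuclideanSpace.basisFun (Fin k) ℂ).orthonormal.1 i]; ring
    _ = k * ‖S‖ := by simp [Finset.sum_const]

lemma norm_normTr_le {k : ℕ} (hk : 0 < k) (S : MatAlg k) : ‖normTr S‖ ≤ ‖S‖ := by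
  have hk' : (0:ℝ) < (k:ℝ) := by exact_mod_cast hk
  rw [normTr, norm_div, Complex.norm_natCast, div_le_iff₀ hk']
  calc ‖LinearMap.trace ℂ (EuclideanSpace ℂ (Fin k)) S.toLinearMap‖
      ≤ k * ‖S‖ := trace_le S
    _ = ‖S‖ * k := by ring

lemma normTr_sub {k : ℕ} (X Y : MatAlg k) : normTr X - normTr Y = normTr (X - Y) := by
  simp [normTr, map_sub, sub_div]

/-- The locally finite dimensional tracial states on a separable C*-algebra form a weak*-closed
subset of the dual: if a net of LFD tracial states converges pointwise on `A` to a tracial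
state `τ`, then `τ` is LFD. -/
theorem isLFDTrace_of_weakStar_limit
    {A : Type*} [NonUnitalCStarAlgebra A] [TopologicalSpace.SeparableSpace A]
    {ι : Type*} (l : Filter ι) [l.NeBot] (T : ι → A →L[ℂ] ℂ)
    (hT : ∀ i, IsTracialState (T i) ∧ IsLFDTrace (T i))
    (τ : A →L[ℂ] ℂ) (hτ : IsTracialState τ)
    (hlim : ∀ a : A, Tendsto (fun i => T i a) l (𝓝 (τ a))) :
    IsLFDTrace τ := by
  obtain ⟨hτnorm, -, -⟩ := hτ
  obtain ⟨u, hu⟩ := TopologicalSpace.exists_dense_seq A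
  have key : ∀ n : ℕ, ∃ (K : ℕ) (ψ : A →ₗ[ℂ] MatAlg K), 0 < K ∧ IsCCP ψ ∧
      ∀ m ∈ Finset.range (n+1),
        infDist (u m) (MultDomain ψ) < 1/(n+1) ∧
        dist (normTr (ψ (u m))) (τ (u m)) < 2/(n+1) := by
    intro n
    have hpos : (0:ℝ) < 1/(n+1) := by positivity
    have hi : ∀ᶠ i in l, ∀ m ∈ Finset.range (n+1),
        dist (T i (u m)) (τ (u m)) < 1/(n+1) := by
      rw [eventually_all_finset]
      intro m _
      exact Metric.tendsto_nhds.1 (hlim (u m)) _ hpos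
    obtain ⟨i, hi⟩ := hi.exists
    obtain ⟨k, φ, hk, hccp, hdist, htr⟩ := (hT i).2
    have hj : ∀ᶠ j in atTop, ∀ m ∈ Finset.range (n+1),
        infDist (u m) (MultDomain (φ j)) < 1/(n+1) ∧
        dist (normTr (φ j (u m))) (T i (u m)) < 1/(n+1) := by
      rw [eventually_all_finset]
      intro m _
      have h1 := Metric.tendsto_nhds.1 (hdist (u m)) _ hpos
      have h2 := Metric.tendsto_nhds.1 (htr (u m)) _ hpos
      filter_upwards [h1, h2] with j h1 h2
      refine ⟨?_, h2⟩
      rwa [Real.dist_0_eq_abs, abs_of_nonneg infDist_nonneg] at h1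
    obtain ⟨j, hj⟩ := hj.exists
    refine ⟨k j, φ j, hk j, hccp j, fun m hm => ⟨(hj m hm).1, ?_⟩⟩
    calc dist (normTr (φ j (u m))) (τ (u m))
        ≤ dist (normTr (φ j (u m))) (T i (u m)) + dist (T i (u m)) (τ (u m)) :=
          dist_triangle _ _ _
      _ < 1/(n+1) + 1/(n+1) := add_lt_add (hj m hm).2 (hi m hm)
      _ = 2/(n+1) := by ring
  choose K ψ hK hCCP hmain using key
  have hsmall : Tendsto (fun n : ℕ => 1/((n:ℝ)+1)) atTop (𝓝 0) :=
    tendsto_one_div_add_atTop_nhds_zero_nat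
  refine ⟨K, ψ, hK, hCCP, ?_, ?_⟩
  · intro a
    rw [Metric.tendsto_nhds]
    intro ε hε
    obtain ⟨m, hm⟩ := hu.exists_dist_lt a (by linarith : (0:ℝ) < ε/2)
    have hev : ∀ᶠ n : ℕ in atTop, 1/((n:ℝ)+1) < ε/2 :=
      hsmall.eventually_lt_const (by linarith)
    filter_upwards [eventually_ge_atTop m, hev] with n hnm hn1
    have hmem : m ∈ Finset.range (n+1) := Finset.mem_range.2 (Nat.lt_succ_of_le hnm)
    have h1 := (hmain n m hmem).1
    rw [Real.dist_0_eq_abs, abs_of_nonneg infDist_nonneg]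
    calc infDist a (MultDomain (ψ n))
        ≤ infDist (u m) (MultDomain (ψ n)) + dist a (u m) :=
          infDist_le_infDist_add_dist
      _ < 1/(n+1) + ε/2 := add_lt_add h1 hm
      _ < ε/2 + ε/2 := by linarith
      _ = ε := by ring
  · intro a
    rw [Metric.tendsto_nhds]
    intro ε hε
    obtain ⟨m, hm⟩ := hu.exists_dist_lt a (by linarith : (0:ℝ) < ε/4)
    have hev : ∀ᶠ n : ℕ in atTop, 1/((n:ℝ)+1) < ε/8 :=
      hsmall.eventually_lt_const (by linarith)
    filter_upwards [eventually_ge_atTop m, hev] with n hnm hn1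
    have hmem : m ∈ Finset.range (n+1) := Finset.mem_range.2 (Nat.lt_succ_of_le hnm)
    have h2 := (hmain n m hmem).2
    have hA : dist (normTr (ψ n a)) (normTr (ψ n (u m))) < ε/4 := by
      rw [dist_eq_norm, normTr_sub, ← map_sub]
      calc ‖normTr (ψ n (a - u m))‖ ≤ ‖ψ n (a - u m)‖ := norm_normTr_le (hK n) _
        _ ≤ ‖a - u m‖ := (hCCP n).2 _
        _ = dist a (u m) := (dist_eq_norm a (u m)).symm
        _ < ε/4 := hm
    have hC : dist (τ (u m)) (τ a) < ε/4 := by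
      rw [dist_eq_norm, ← map_sub]
      calc ‖τ (u m - a)‖ ≤ ‖τ‖ * ‖u m - a‖ := τ.le_opNorm _
        _ = ‖u m - a‖ := by rw [hτnorm]; ring
        _ = dist a (u m) := by rw [← dist_eq_norm, dist_comm]
        _ < ε/4 := hm
    calc dist (normTr (ψ n a)) (τ a)
        ≤ dist (normTr (ψ n a)) (normTr (ψ n (u m)))
          + dist (normTr (ψ n (u m))) (τ (u m)) + dist (τ (u m)) (τ a) :=
          dist_triangle4 _ _ _ _
      _ < ε/4 + 2/(n+1) + ε/4 := by
          exact add_lt_add (add_lt_add hA h2) hC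
      _ < ε/4 + ε/4 + ε/4 := by
          have : 2/((n:ℝ)+1) < ε/4 := by
            rw [show (2:ℝ)/((n:ℝ)+1) = 2 * (1/((n:ℝ)+1)) by ring]
            linarith
          linarith
      _ < ε := by linarith
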